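/- arXiv:1503.04787 — 2 statements merged into one kernel-verified Lean document; each statement's English description precedes it below -/
import Mathlib

section
/- Let N ≥ 1, let (a,b) be an open real interval, let A_1, A_0 : (a,b) → Mat_N(ℂ), and let C, U, V ∈ Mat_N(ℂ). Suppose Ψ : (a,b) → Mat_N(ℂ) is twice differentiable, Ψ(x) is invertible for all x ∈ (a,b), and Ψ satisfies the two equations 2x(1−x)·Ψ'(x) + Ψ(x)·A_1(x) = (C − xU)·Ψ(x) and x(1−x)·Ψ''(x) + Ψ'(x)·A_1(x) + Ψ(x)·A_0(x) = −V·Ψ(x) for all x ∈ (a,b). If F : (a,b) → Mat_N(ℂ) is twice differentiable and satisfies x(1−x)·F''(x) + F'(x)·A_1(x) + F(x)·A_0(x) = Λ·F(x) for all x ∈ (a,b) with Λ ∈ Mat_N(ℂ), then Q(x) = F(x)·Ψ(x)^{−1} satisfies the hypergeometric equation x(1−x)·Q''(x) + Q'(x)·(C − xU) − Q(x)·V = Λ·Q(x) for all x ∈ (a,b). -/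
/-!
Write `F = Q Ψ`. By the product rule, `x(1-x) F'' + F' A₁ + F A₀` equals
`x(1-x) Q'' Ψ + Q' (2x(1-x) Ψ' + Ψ A₁) + Q (x(1-x) Ψ'' + Ψ' A₁ + Ψ A₀)`, and the two equations
satisfied by `Ψ` turn this into `(x(1-x) Q'' + Q' (C - xU) - Q V) Ψ`; cancelling the invertible
`Ψ` gives the hypergeometric equation for `Q`. The only analytic input is that `Q = F Ψ⁻¹` is
twice differentiable, which follows from `(Ψ⁻¹)' = -Ψ⁻¹ Ψ' Ψ⁻¹`.
-/

open Filter Topology Matrix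

section MatrixDeriv

variable {𝕜 R : Type*} [NontriviallyNormedField 𝕜] {m n p : Type*}

def HasMatrixDerivAt [NormedAddCommGroup R] [NormedSpace 𝕜 R] (f : 𝕜 → Matrix m n R)
    (f' : Matrix m n R) (x : 𝕜) : Prop :=
  ∀ i j, HasDerivAt (fun t => f t i j) (f' i j) x

section NormedSpace

variable [NormedAddCommGroup R] [NormedSpace 𝕜 R] {f g : 𝕜 → Matrix m n R}
  {f' g' : Matrix m n R} {x : 𝕜}

theorem hasMatrixDerivAt_const (x : 𝕜) (c : Matrix m n R) :
    HasMatrixDerivAt (fun _ => c) 0 x :=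
  fun i j => hasDerivAt_const x (c i j)

theorem HasMatrixDerivAt.unique (hf : HasMatrixDerivAt f f' x) (hg : HasMatrixDerivAt f g' x) :
    f' = g' :=
  Matrix.ext fun i j => (hf i j).unique (hg i j)

theorem HasMatrixDerivAt.congr_of_eventuallyEq (hf : HasMatrixDerivAt f f' x)
    (hg : g =ᶠ[𝓝 x] f) : HasMatrixDerivAt g f' x :=
  fun i j => (hf i j).congr_of_eventuallyEq (hg.mono fun _ ht => congrFun (congrFun ht i) j)

theorem HasMatrixDerivAt.add (hf : HasMatrixDerivAt f f' x) (hg : HasMatrixDerivAt g g' x) :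
    HasMatrixDerivAt (fun t => f t + g t) (f' + g') x :=
  fun i j => (hf i j).add (hg i j)

theorem HasMatrixDerivAt.neg (hf : HasMatrixDerivAt f f' x) :
    HasMatrixDerivAt (fun t => -f t) (-f') x :=
  fun i j => (hf i j).neg

theorem IsOpen.eqOn_of_hasMatrixDerivAt {s : Set 𝕜} (hs : IsOpen s) {f g : 𝕜 → Matrix m n R}
    {f' g' : 𝕜 → Matrix m n R} (h : Set.EqOn f g s)
    (hf : ∀ x ∈ s, HasMatrixDerivAt f (f' x) x) (hg : ∀ x ∈ s, HasMatrixDerivAt g (g' x) x) :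
    Set.EqOn f' g' s := fun x hx =>
  (hf x hx).unique ((hg x hx).congr_of_eventuallyEq (eventually_of_mem (hs.mem_nhds hx) h))

end NormedSpace

theorem HasMatrixDerivAt.mul [NormedRing R] [NormedAlgebra 𝕜 R] [Fintype n]
    {A : 𝕜 → Matrix m n R} {B : 𝕜 → Matrix n p R} {A' : Matrix m n R} {B' : Matrix n p R}
    {x : 𝕜} (hA : HasMatrixDerivAt A A' x) (hB : HasMatrixDerivAt B B' x) :
    HasMatrixDerivAt (fun t => A t * B t) (A' * B x + A x * B') x := by
  intro i k
  simp only [mul_apply, Matrix.add_apply, ← Finset.sum_add_distrib]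
  exact HasDerivAt.fun_sum fun j _ => (hA i j).mul (hB j k)

section Inverse

variable [NormedField R] [NormedAlgebra 𝕜 R] [Fintype n] [DecidableEq n]
  {A : 𝕜 → Matrix n n R} {x : 𝕜}

theorem differentiableAt_det (hA : ∀ i j, DifferentiableAt 𝕜 (fun t => A t i j) x) :
    DifferentiableAt 𝕜 (fun t => (A t).det) x := by
  simp only [det_apply']
  exact DifferentiableAt.fun_sum fun σ _ =>
    (DifferentiableAt.fun_finsetProd fun i _ => hA (σ i) i).const_mul _

theorem differentiableAt_inv_apply (hA : ∀ i j, DifferentiableAt 𝕜 (fun t => A t i j) x)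
    (hx : (A x).det ≠ 0) (i j : n) :
    DifferentiableAt 𝕜 (fun t => (A t)⁻¹ i j) x := by
  simp only [inv_def, Ring.inverse_eq_inv', Matrix.smul_apply, smul_eq_mul]
  refine ((differentiableAt_det hA).inv hx).mul ?_
  simp only [adjugate_apply]
  refine differentiableAt_det fun k l => ?_
  by_cases hkj : k = j
  · simp [hkj]
  · simpa [hkj] using hA k l

/-- The entries of `A⁻¹` are differentiable by Cramer's rule; the value of the derivative then
comes from differentiating `A⁻¹ * A = 1`, which holds near `x` since `det A` is continuous. -/
theorem HasMatrixDerivAt.inv {A' : Matrix n n R} (hA : HasMatrixDerivAt A A' x)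
    (hx : IsUnit (A x)) :
    HasMatrixDerivAt (fun t => (A t)⁻¹) (-((A x)⁻¹ * A' * (A x)⁻¹)) x := by
  have hdiff : ∀ i j, DifferentiableAt 𝕜 (fun t => A t i j) x := fun i j =>
    (hA i j).differentiableAt
  have hdet : (A x).det ≠ 0 := ((isUnit_iff_isUnit_det _).mp hx).ne_zero
  set B : Matrix n n R := fun i j => deriv (fun t => (A t)⁻¹ i j) x
  have hB : HasMatrixDerivAt (fun t => (A t)⁻¹) B x := fun i j =>
    (differentiableAt_inv_apply hdiff hdet i j).hasDerivAt
  have hunit : ∀ᶠ t in 𝓝 x, IsUnit (A t).det :=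
    ((differentiableAt_det hdiff).continuousAt.eventually_ne hdet).mono fun _ h => h.isUnit
  have hone : HasMatrixDerivAt (fun t => (A t)⁻¹ * A t) 0 x :=
    (hasMatrixDerivAt_const x 1).congr_of_eventuallyEq
      (hunit.mono fun _ ht => nonsing_inv_mul _ ht)
  have hzero : B * A x + (A x)⁻¹ * A' = 0 := (hB.mul hA).unique hone
  have hB' : B = -((A x)⁻¹ * A' * (A x)⁻¹) := by
    rw [← neg_mul, ← eq_neg_of_add_eq_zero_left hzero, mul_assoc,
      mul_nonsing_inv _ hdet.isUnit, mul_one]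
  exact hB' ▸ hB

theorem exists_hasMatrixDerivAt_mul_inv_of_twice {s : Set 𝕜} {F F' F'' A A' A'' : 𝕜 → Matrix n n R}
    (hF : ∀ x ∈ s, HasMatrixDerivAt F (F' x) x) (hF' : ∀ x ∈ s, HasMatrixDerivAt F' (F'' x) x)
    (hA : ∀ x ∈ s, HasMatrixDerivAt A (A' x) x) (hA' : ∀ x ∈ s, HasMatrixDerivAt A' (A'' x) x)
    (hunit : ∀ x ∈ s, IsUnit (A x)) :
    ∃ Q' Q'' : 𝕜 → Matrix n n R,
      (∀ x ∈ s, HasMatrixDerivAt (fun t => F t * (A t)⁻¹) (Q' x) x) ∧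
        ∀ x ∈ s, HasMatrixDerivAt Q' (Q'' x) x := by
  have hG x (hx : x ∈ s) := (hA x hx).inv (hunit x hx)
  have hG' x (hx : x ∈ s) := (((hG x hx).mul (hA' x hx)).mul (hG x hx)).neg
  exact ⟨_, _, fun x hx => (hF x hx).mul (hG x hx),
    fun x hx => ((hF' x hx).mul (hG x hx)).add ((hF x hx).mul (hG' x hx))⟩

end Inverse

end MatrixDeriv

section SecondOrder

variable {K R : Type*} [CommRing K] [Ring R] [Algebra K R]

/-- The value at a point of `F D` for `D = ∂² c + ∂ a₁ + a₀`, given the values of `F, F', F''`. -/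
def secondOrderAct (c : K) (a₁ a₀ F F' F'' : R) : R := c • F'' + F' * a₁ + F * a₀

theorem secondOrderAct_mul {c : K} {a₁ a₀ b₁ b₀ Q Q' Q'' P P' P'' : R}
    (h₁ : (2 * c) • P' + P * a₁ = b₁ * P)
    (h₀ : secondOrderAct c a₁ a₀ P P' P'' = b₀ * P) :
    secondOrderAct c a₁ a₀ (Q * P) (Q' * P + Q * P') (Q'' * P + Q' * P' + (Q' * P' + Q * P'')) =
      secondOrderAct c b₁ b₀ Q Q' Q'' * P := by
  unfold secondOrderAct at *
  rw [add_mul (c • Q'' + Q' * b₁), add_mul (c • Q''), mul_assoc Q' b₁, ← h₁, mul_assoc Q b₀, ← h₀]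
  simp only [mul_add, add_mul, smul_add, mul_smul_comm, smul_mul_assoc, mul_assoc, mul_smul]
  module

end SecondOrder

theorem conjugation_to_hypergeometric_general
    (N : ℕ) (a b : ℝ)
    (A1 A0 : ℝ → Matrix (Fin N) (Fin N) ℂ)
    (Cm U V : Matrix (Fin N) (Fin N) ℂ)
    (Ψ Ψ' Ψ'' : ℝ → Matrix (Fin N) (Fin N) ℂ)
    (hΨinv : ∀ x ∈ Set.Ioo a b, IsUnit (Ψ x))
    (hΨd1 : ∀ x ∈ Set.Ioo a b, ∀ k l : Fin N,
      HasDerivAt (fun t : ℝ => Ψ t k l) (Ψ' x k l) x)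
    (hΨd2 : ∀ x ∈ Set.Ioo a b, ∀ k l : Fin N,
      HasDerivAt (fun t : ℝ => Ψ' t k l) (Ψ'' x k l) x)
    (hΨ1 : ∀ x ∈ Set.Ioo a b,
      (2 * (x : ℂ) * (1 - (x : ℂ))) • Ψ' x + Ψ x * A1 x = (Cm - (x : ℂ) • U) * Ψ x)
    (hΨ2 : ∀ x ∈ Set.Ioo a b,
      ((x : ℂ) * (1 - (x : ℂ))) • Ψ'' x + Ψ' x * A1 x + Ψ x * A0 x = -(V * Ψ x))
    (F F' F'' : ℝ → Matrix (Fin N) (Fin N) ℂ)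
    (Λ : Matrix (Fin N) (Fin N) ℂ)
    (hFd1 : ∀ x ∈ Set.Ioo a b, ∀ k l : Fin N,
      HasDerivAt (fun t : ℝ => F t k l) (F' x k l) x)
    (hFd2 : ∀ x ∈ Set.Ioo a b, ∀ k l : Fin N,
      HasDerivAt (fun t : ℝ => F' t k l) (F'' x k l) x)
    (hF : ∀ x ∈ Set.Ioo a b,
      ((x : ℂ) * (1 - (x : ℂ))) • F'' x + F' x * A1 x + F x * A0 x = Λ * F x) :
    ∃ Q' Q'' : ℝ → Matrix (Fin N) (Fin N) ℂ,
      (∀ x ∈ Set.Ioo a b, ∀ k l : Fin N,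
        HasDerivAt (fun t : ℝ => (F t * (Ψ t)⁻¹) k l) (Q' x k l) x) ∧
      (∀ x ∈ Set.Ioo a b, ∀ k l : Fin N,
        HasDerivAt (fun t : ℝ => Q' t k l) (Q'' x k l) x) ∧
      (∀ x ∈ Set.Ioo a b,
        ((x : ℂ) * (1 - (x : ℂ))) • Q'' x + Q' x * (Cm - (x : ℂ) • U)
          - (F x * (Ψ x)⁻¹) * V = Λ * (F x * (Ψ x)⁻¹)) := by
  change ∀ x ∈ Set.Ioo a b, HasMatrixDerivAt Ψ (Ψ' x) x at hΨd1
  change ∀ x ∈ Set.Ioo a b, HasMatrixDerivAt Ψ' (Ψ'' x) x at hΨd2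
  change ∀ x ∈ Set.Ioo a b, HasMatrixDerivAt F (F' x) x at hFd1
  change ∀ x ∈ Set.Ioo a b, HasMatrixDerivAt F' (F'' x) x at hFd2
  obtain ⟨Q', Q'', hQ, hQ'⟩ := exists_hasMatrixDerivAt_mul_inv_of_twice hFd1 hFd2 hΨd1 hΨd2 hΨinv
  set Q := fun t => F t * (Ψ t)⁻¹
  refine ⟨Q', Q'', hQ, hQ', fun x hx => ?_⟩
  have hFQ : Set.EqOn F (fun t => Q t * Ψ t) (Set.Ioo a b) := fun t ht =>
    (nonsing_inv_mul_cancel_right _ _ ((isUnit_iff_isUnit_det _).mp (hΨinv t ht))).symm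
  have hF'Q := isOpen_Ioo.eqOn_of_hasMatrixDerivAt hFQ hFd1 fun t ht =>
    (hQ t ht).mul (hΨd1 t ht)
  have hF''Q := isOpen_Ioo.eqOn_of_hasMatrixDerivAt hF'Q hFd2 fun t ht =>
    ((hQ' t ht).mul (hΨd1 t ht)).add ((hQ t ht).mul (hΨd2 t ht))
  have hconj := secondOrderAct_mul (c := (x : ℂ) * (1 - x)) (Q := Q x) (Q' := Q' x) (Q'' := Q'' x)
    (by rw [← mul_assoc]; exact hΨ1 x hx) ((hΨ2 x hx).trans (neg_mul _ _).symm)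
  apply (hΨinv x hx).mul_right_cancel
  calc _ = secondOrderAct ((x : ℂ) * (1 - x)) (Cm - (x : ℂ) • U) (-V) (Q x) (Q' x) (Q'' x)
          * Ψ x := by
        rw [secondOrderAct, mul_neg, ← sub_eq_add_neg]
    _ = secondOrderAct ((x : ℂ) * (1 - x)) (A1 x) (A0 x) (F x) (F' x) (F'' x) := by
        rw [hFQ hx, hF'Q hx, hF''Q hx]
        exact hconj.symm
    _ = Λ * Q x * Ψ x := by
        rw [mul_assoc]
        exact (hF x hx).trans (congrArg (Λ * ·) (hFQ hx))

/-- If `Ψ` is twice differentiable, everywhere invertible on `(a,b)` and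
satisfies the two conjugation equations, and `F` satisfies
`x(1-x) F'' + F' A₁ + F A₀ = Λ F`, then `Q = F Ψ⁻¹` satisfies the hypergeometric
equation `x(1-x) Q'' + Q' (C - xU) - Q V = Λ Q` on `(a,b)`. -/
theorem conjugation_to_hypergeometric
    (N : ℕ) (hN : 1 ≤ N) (a b : ℝ)
    (A1 A0 : ℝ → Matrix (Fin N) (Fin N) ℂ)
    (Cm U V : Matrix (Fin N) (Fin N) ℂ)
    (Ψ Ψ' Ψ'' : ℝ → Matrix (Fin N) (Fin N) ℂ)
    (hΨinv : ∀ x ∈ Set.Ioo a b, IsUnit (Ψ x))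
    (hΨd1 : ∀ x ∈ Set.Ioo a b, ∀ k l : Fin N,
      HasDerivAt (fun t : ℝ => Ψ t k l) (Ψ' x k l) x)
    (hΨd2 : ∀ x ∈ Set.Ioo a b, ∀ k l : Fin N,
      HasDerivAt (fun t : ℝ => Ψ' t k l) (Ψ'' x k l) x)
    (hΨ1 : ∀ x ∈ Set.Ioo a b,
      (2 * (x : ℂ) * (1 - (x : ℂ))) • Ψ' x + Ψ x * A1 x = (Cm - (x : ℂ) • U) * Ψ x)
    (hΨ2 : ∀ x ∈ Set.Ioo a b,
      ((x : ℂ) * (1 - (x : ℂ))) • Ψ'' x + Ψ' x * A1 x + Ψ x * A0 x = -(V * Ψ x))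
    (F F' F'' : ℝ → Matrix (Fin N) (Fin N) ℂ)
    (Λ : Matrix (Fin N) (Fin N) ℂ)
    (hFd1 : ∀ x ∈ Set.Ioo a b, ∀ k l : Fin N,
      HasDerivAt (fun t : ℝ => F t k l) (F' x k l) x)
    (hFd2 : ∀ x ∈ Set.Ioo a b, ∀ k l : Fin N,
      HasDerivAt (fun t : ℝ => F' t k l) (F'' x k l) x)
    (hF : ∀ x ∈ Set.Ioo a b,
      ((x : ℂ) * (1 - (x : ℂ))) • F'' x + F' x * A1 x + F x * A0 x = Λ * F x) :
    ∃ Q' Q'' : ℝ → Matrix (Fin N) (Fin N) ℂ,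
      (∀ x ∈ Set.Ioo a b, ∀ k l : Fin N,
        HasDerivAt (fun t : ℝ => (F t * (Ψ t)⁻¹) k l) (Q' x k l) x) ∧
      (∀ x ∈ Set.Ioo a b, ∀ k l : Fin N,
        HasDerivAt (fun t : ℝ => Q' t k l) (Q'' x k l) x) ∧
      (∀ x ∈ Set.Ioo a b,
        ((x : ℂ) * (1 - (x : ℂ))) • Q'' x + Q' x * (Cm - (x : ℂ) • U)
          - (F x * (Ψ x)⁻¹) * V = Λ * (F x * (Ψ x)⁻¹)) :=
  conjugation_to_hypergeometric_general N a b A1 A0 Cm U V Ψ Ψ' Ψ'' hΨinv hΨd1 hΨd2 hΨ1 hΨ2 F F' F''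
    Λ hFd1 hFd2 hF
end

section
/- Fix n ∈ ℕ and let W'(x) = x(1−x)^n·[[2−x, 2−(n+3)x],[2−(n+3)x, 1−x+(1−(n+2)x)²]]. If T ∈ Mat_2(ℂ) satisfies T·W'(x) = W'(x)·T* for all x ∈ [0,1], then T = t·I for some real number t. (Equivalently, the commuting space of W' is ℝ·I.) -/
open scoped Matrix

/-- The matrix weight `W'(x) = F_0(x) W(x) F_0(x)ᴴ`. -/
noncomputable def Wpmat (n : ℕ) (x : ℝ) : Matrix (Fin 2) (Fin 2) ℂ :=
  ((x : ℂ) * (1 - (x : ℂ)) ^ n) •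
    !![2 - (x : ℂ), 2 - ((n : ℂ) + 3) * (x : ℂ);
       2 - ((n : ℂ) + 3) * (x : ℂ),
       1 - (x : ℂ) + (1 - ((n : ℂ) + 2) * (x : ℂ)) ^ 2]

/-- the commuting space of `W'` is `ℝ I`: any constant matrix `T` with
`T W'(x) = W'(x) Tᴴ` for all `x ∈ [0,1]` is a real multiple of the identity. -/
theorem Wpmat_commuting_space (n : ℕ) (T : Matrix (Fin 2) (Fin 2) ℂ)
    (hT : ∀ x ∈ Set.Icc (0 : ℝ) 1, T * Wpmat n x = Wpmat n x * Tᴴ) :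
    ∃ t : ℝ, T = (t : ℂ) • (1 : Matrix (Fin 2) (Fin 2) ℂ) := by
  have hν : ((n : ℂ) + 2) ≠ 0 := by
    have h2 : ((n + 2 : ℕ) : ℂ) ≠ 0 := Nat.cast_ne_zero.mpr (by omega)
    push_cast at h2; exact h2
  -- For x in (0,1) the scalar factor is nonzero, so T commutes (in the weighted
  -- sense) with the polynomial matrix itself.
  have key : ∀ x : ℝ, x ∈ Set.Icc (0:ℝ) 1 → (x:ℂ) * (1 - (x:ℂ)) ^ n ≠ 0 →
      (T * !![2 - (x : ℂ), 2 - ((n : ℂ) + 3) * (x : ℂ);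
       2 - ((n : ℂ) + 3) * (x : ℂ),
       1 - (x : ℂ) + (1 - ((n : ℂ) + 2) * (x : ℂ)) ^ 2] =
       !![2 - (x : ℂ), 2 - ((n : ℂ) + 3) * (x : ℂ);
       2 - ((n : ℂ) + 3) * (x : ℂ),
       1 - (x : ℂ) + (1 - ((n : ℂ) + 2) * (x : ℂ)) ^ 2] * Tᴴ) := by
    intro x hx hs
    have h := hT x hx
    rw [Wpmat, Matrix.mul_smul, Matrix.smul_mul] at h
    exact smul_right_injective (Matrix (Fin 2) (Fin 2) ℂ) hs h
  -- Specialize at x = 1/2, 1/3, 1/4 and extract scalar entry equations.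
  have h1 := key (1/2) (by norm_num) (by push_cast; norm_num)
  have h2 := key (1/3) (by norm_num) (by push_cast; norm_num)
  have h3 := key (1/4) (by norm_num) (by push_cast; norm_num)
  have e1a := congrFun (congrFun h1 0) 0
  have e3a := congrFun (congrFun h1 1) 0
  have e1b := congrFun (congrFun h2 0) 0
  have e3b := congrFun (congrFun h2 1) 0
  have e3c := congrFun (congrFun h3 1) 0
  simp [Matrix.mul_apply, Fin.sum_univ_two, Matrix.conjTranspose_apply] at e1a e3a e1b e3b e3c
  -- a = T 0 0 is real
  have ha : T 0 0 = (starRingEnd ℂ) (T 0 0) := by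
    have ha0 : ((n:ℂ) + 2) * (T 0 0 - (starRingEnd ℂ) (T 0 0)) = 0 := by
      linear_combination (3 - (n:ℂ)) * e1a - (3 * (1 - (n:ℂ)) / 2) * e1b
    rcases mul_eq_zero.mp ha0 with h | h
    · exact absurd h hν
    · exact sub_eq_zero.mp h
  -- b = T 0 1 is real
  have hab : T 0 1 = (starRingEnd ℂ) (T 0 1) := by
    have h0 : ((n:ℂ) + 2) * (T 0 1 - (starRingEnd ℂ) (T 0 1)) = 0 := by
      linear_combination (-5 : ℂ) * e1a + (9/2 : ℂ) * e1b
    rcases mul_eq_zero.mp h0 with h | h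
    · exact absurd h hν
    · exact sub_eq_zero.mp h
  rw [← ha, ← hab] at e3a e3b e3c
  -- b = 0
  have hb : T 0 1 = 0 := by
    have h0 : ((n:ℂ) + 2) ^ 2 * T 0 1 = 0 := by
      linear_combination (-24 : ℂ) * e3a + (72 : ℂ) * e3b - (48 : ℂ) * e3c
    rcases mul_eq_zero.mp h0 with h | h
    · exact absurd (pow_eq_zero_iff (by norm_num) |>.mp h) hν
    · exact h
  rw [hb] at e3a e3b
  -- d = a
  have had : T 1 1 = T 0 0 := by
    have h0 : ((n:ℂ) + 2) * (T 1 1 - T 0 0) = 0 := by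
      linear_combination (-5 : ℂ) * e3a + (9/2 : ℂ) * e3b
    rcases mul_eq_zero.mp h0 with h | h
    · exact absurd h hν
    · exact sub_eq_zero.mp h
  -- c = 0
  have hc : T 1 0 = 0 := by
    linear_combination (3 * e3b - 2 * e3a) / 2 - had
  refine ⟨(T 0 0).re, ?_⟩
  have haa : T 0 0 = ((T 0 0).re : ℂ) := (Complex.conj_eq_iff_re.mp ha.symm).symm
  ext i j
  fin_cases i <;> fin_cases j <;>
    simp [Matrix.one_apply, hb, hc, had, ← haa]
end
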